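/- arXiv:2604.21844 — 4 statements merged into one kernel-verified Lean document; each statement's English description precedes it below -/
import Mathlib

section
/- Monotonicity and continuity of the criticality parameter (Lemma 1, part (a), regularity): The function ξ : (0,∞) → (0, 1/b(0)), where for each γ > 0, ξ(γ) is the unique solution in (0, 1/b(0)) of ∫_0^γ (b(x)ξ/(1 − b(x)ξ))^2 dx = 1, is monotonically decreasing and continuous on (0,∞). -/
open MeasureTheory ProbabilityTheory Filter Set
open scoped RealInnerProductSpace ENNReal NNReal

noncomputable section

/-- The space `L²([0,1], ℝ)`. -/
abbrev H01 : Type := MeasureTheory.Lp ℝ 2 (MeasureTheory.volume.restrict (Set.Icc (0:ℝ) 1))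

instance : MeasurableSpace H01 := borel _
instance : BorelSpace H01 := ⟨rfl⟩

open Topology

/-! Write `F(γ, ξ) = ∫_0^γ (b ξ / (1 - b ξ))²`. Since `1 / (1 - b ξ)` increases with `ξ`, we have
`F(γ, ξa) ≤ (ξa / ξb)² F(γ, ξb)` for `0 ≤ ξa ≤ ξb`; so `F(γ, ·)` is increasing, strictly wherever
it is positive, while `F(·, ξ)` is increasing and continuous.

If `γ₁ ≤ γ₂` but `ξ(γ₁) < ξ(γ₂)`, then `1 = F(γ₁, ξ(γ₁)) < F(γ₁, ξ(γ₂)) ≤ F(γ₂, ξ(γ₂)) = 1`.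
If `a < ξ(γ₀)`, then `F(γ₀, a) < 1`, so by continuity `F(γ, a) < 1 = F(γ, ξ(γ))` for `γ` near `γ₀`,
which forces `a < ξ(γ)`; symmetrically from above, and `ξ` is continuous at `γ₀`. -/

theorem continuousAt_of_eventually_apply_eq {X β δ : Type*} [TopologicalSpace X]
    [LinearOrder β] [TopologicalSpace β] [OrderTopology β] [DenselyOrdered β]
    [LinearOrder δ] [TopologicalSpace δ] [OrderClosedTopology δ]
    {F : X → β → δ} {f : X → β} {x₀ : X} {s : Set β} {c : δ} (hs : s ∈ 𝓝 (f x₀))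
    (hmono : ∀ᶠ x in 𝓝 x₀, MonotoneOn (F x) s) (hfs : ∀ᶠ x in 𝓝 x₀, f x ∈ s)
    (heq : ∀ᶠ x in 𝓝 x₀, F x (f x) = c)
    (hcont : ∀ a ∈ s, ContinuousAt (fun x => F x a) x₀)
    (huniq : ∀ a ∈ s, F x₀ a = c → a = f x₀) :
    ContinuousAt f x₀ := by
  have hf₀ : f x₀ ∈ s := mem_of_mem_nhds hs
  have hc : F x₀ (f x₀) = c := heq.self_of_nhds
  have below : ∀ a ∈ s, a < f x₀ → ∀ᶠ x in 𝓝 x₀, a < f x := by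
    intro a ha hlt
    have hFa : F x₀ a < c := (hc ▸ hmono.self_of_nhds ha hf₀ hlt.le).lt_of_ne
      fun h => hlt.ne (huniq a ha h)
    filter_upwards [(hcont a ha).eventually_lt_const hFa, hmono, hfs, heq] with x hx hm hfx he
    by_contra! hle
    exact (hm hfx ha hle).not_gt (he ▸ hx)
  have above : ∀ a ∈ s, f x₀ < a → ∀ᶠ x in 𝓝 x₀, f x < a := by
    intro a ha hlt
    have hFa : c < F x₀ a := (hc ▸ hmono.self_of_nhds hf₀ ha hlt.le).lt_of_ne
      fun h => hlt.ne' (huniq a ha h.symm)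
    filter_upwards [(hcont a ha).eventually_const_lt hFa, hmono, hfs, heq] with x hx hm hfx he
    by_contra! hle
    exact (hm ha hfx hle).not_gt (he ▸ hx)
  refine tendsto_order.2 ⟨fun a' ha' => ?_, fun a' ha' => ?_⟩
  · obtain ⟨l, hl, hls⟩ := exists_Ioc_subset_of_mem_nhds' hs ha'
    obtain ⟨a, hla, haf⟩ := exists_between hl.2
    exact (below a (hls ⟨hla, haf.le⟩) haf).mono fun x hx => hl.1.trans_lt (hla.trans hx)
  · obtain ⟨u, hu, hus⟩ := exists_Ico_subset_of_mem_nhds' hs ha'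
    obtain ⟨a, hfa, hau⟩ := exists_between hu.1
    exact (above a (hus ⟨hfa.le, hau⟩) hfa).mono fun x hx => (hx.trans hau).trans_le hu.2

lemma div_one_sub_le_div_one_sub {s t : ℝ} (hs : 0 ≤ s) (hst : s ≤ t) (ht : t < 1) :
    s / (1 - s) ≤ t / (1 - t) :=
  div_le_div₀ (hs.trans hst) hst (by linarith) (by linarith)

lemma sq_mul_div_one_sub_le {u ξa ξb : ℝ} (hu : 0 ≤ u) (ha : 0 ≤ ξa) (hab : ξa ≤ ξb)
    (hb : u * ξb < 1) :
    (u * ξa / (1 - u * ξa)) ^ 2 ≤ (ξa / ξb) ^ 2 * (u * ξb / (1 - u * ξb)) ^ 2 := by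
  rcases (ha.trans hab).eq_or_lt with hξb | hξb
  · simp [← hξb, le_antisymm (hξb ▸ hab) ha]
  have hua : 0 ≤ u * ξa := mul_nonneg hu ha
  have hscale : ξa / ξb * (u * ξb / (1 - u * ξb)) = u * ξa / (1 - u * ξb) := by
    field_simp
  have hmul : u * ξa ≤ u * ξb := mul_le_mul_of_nonneg_left hab hu
  rw [← mul_pow, hscale]
  exact pow_le_pow_left₀ (div_nonneg hua (by linarith))
    (div_le_div_of_nonneg_left hua (by linarith) (by linarith)) 2

section Criticality

variable {b : ℝ → ℝ}

def criticalityIntegral (b : ℝ → ℝ) (γ ξ : ℝ) : ℝ :=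
  ∫ x in Ioc 0 γ, (b x * ξ / (1 - b x * ξ)) ^ 2

lemma mul_lt_one_of_mem_Ico (hb_anti : AntitoneOn b (Ici 0)) (hb0 : 0 < b 0) {x ξ : ℝ}
    (hx : 0 ≤ x) (hξ : ξ ∈ Ico 0 (1 / b 0)) : b x * ξ < 1 := by
  calc b x * ξ ≤ b 0 * ξ := mul_le_mul_of_nonneg_right (hb_anti self_mem_Ici hx hx) hξ.1
    _ < 1 := by rw [← lt_div_iff₀' hb0]; exact hξ.2

lemma integrableOn_Icc_criticalityIntegrand (hb_nonneg : ∀ x, 0 ≤ x → 0 ≤ b x)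
    (hb_anti : AntitoneOn b (Ici 0)) (hb0 : 0 < b 0) {ξ : ℝ} (hξ : ξ ∈ Ico 0 (1 / b 0))
    (T : ℝ) : IntegrableOn (fun x => (b x * ξ / (1 - b x * ξ)) ^ 2) (Icc 0 T) := by
  have hb : AEMeasurable b (volume.restrict (Icc 0 T)) :=
    ((hb_anti.mono Icc_subset_Ici_self).integrableOn_isCompact isCompact_Icc).aemeasurable
  refine Integrable.mono' (integrableOn_const (C := (b 0 * ξ / (1 - b 0 * ξ)) ^ 2)
    measure_Icc_lt_top.ne) (((hb.mul_const ξ).div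
      (aemeasurable_const.sub (hb.mul_const ξ))).pow_const 2).aestronglyMeasurable ?_
  filter_upwards [self_mem_ae_restrict measurableSet_Icc] with x hx
  have hbx : 0 ≤ b x * ξ := mul_nonneg (hb_nonneg x hx.1) hξ.1
  have hbx_le : b x * ξ ≤ b 0 * ξ :=
    mul_le_mul_of_nonneg_right (hb_anti self_mem_Ici hx.1 hx.1) hξ.1
  have hb0ξ : b 0 * ξ < 1 := mul_lt_one_of_mem_Ico hb_anti hb0 le_rfl hξ
  rw [Real.norm_of_nonneg (sq_nonneg _)]
  exact pow_le_pow_left₀ (div_nonneg hbx (by linarith))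
    (div_one_sub_le_div_one_sub hbx hbx_le hb0ξ) 2

lemma integrableOn_Ioc_criticalityIntegrand (hb_nonneg : ∀ x, 0 ≤ x → 0 ≤ b x)
    (hb_anti : AntitoneOn b (Ici 0)) (hb0 : 0 < b 0) {ξ : ℝ} (hξ : ξ ∈ Ico 0 (1 / b 0))
    (γ : ℝ) : IntegrableOn (fun x => (b x * ξ / (1 - b x * ξ)) ^ 2) (Ioc 0 γ) :=
  (integrableOn_Icc_criticalityIntegrand hb_nonneg hb_anti hb0 hξ γ).mono_set Ioc_subset_Icc_self

lemma criticalityIntegral_nonneg (γ ξ : ℝ) : 0 ≤ criticalityIntegral b γ ξ :=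
  setIntegral_nonneg measurableSet_Ioc fun _ _ => sq_nonneg _

lemma criticalityIntegral_mono_left (hb_nonneg : ∀ x, 0 ≤ x → 0 ≤ b x)
    (hb_anti : AntitoneOn b (Ici 0)) (hb0 : 0 < b 0) {γ₁ γ₂ ξ : ℝ} (hξ : ξ ∈ Ico 0 (1 / b 0))
    (hγ : γ₁ ≤ γ₂) : criticalityIntegral b γ₁ ξ ≤ criticalityIntegral b γ₂ ξ :=
  setIntegral_mono_set (integrableOn_Ioc_criticalityIntegrand hb_nonneg hb_anti hb0 hξ γ₂)
    (Eventually.of_forall fun _ => sq_nonneg _) (Ioc_subset_Ioc_right hγ).eventuallyLE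

lemma criticalityIntegral_le_sq_div_mul (hb_nonneg : ∀ x, 0 ≤ x → 0 ≤ b x)
    (hb_anti : AntitoneOn b (Ici 0)) (hb0 : 0 < b 0) {γ ξa ξb : ℝ} (ha : 0 ≤ ξa) (hab : ξa ≤ ξb)
    (hb : ξb ∈ Ico 0 (1 / b 0)) :
    criticalityIntegral b γ ξa ≤ (ξa / ξb) ^ 2 * criticalityIntegral b γ ξb := by
  have ha' : ξa ∈ Ico 0 (1 / b 0) := ⟨ha, hab.trans_lt hb.2⟩
  rw [criticalityIntegral, criticalityIntegral, ← integral_const_mul]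
  exact setIntegral_mono_on (integrableOn_Ioc_criticalityIntegrand hb_nonneg hb_anti hb0 ha' γ)
    ((integrableOn_Ioc_criticalityIntegrand hb_nonneg hb_anti hb0 hb γ).const_mul _)
    measurableSet_Ioc fun x hx => sq_mul_div_one_sub_le (hb_nonneg x hx.1.le) ha hab
      (mul_lt_one_of_mem_Ico hb_anti hb0 hx.1.le hb)

lemma monotoneOn_criticalityIntegral (hb_nonneg : ∀ x, 0 ≤ x → 0 ≤ b x)
    (hb_anti : AntitoneOn b (Ici 0)) (hb0 : 0 < b 0) (γ : ℝ) :
    MonotoneOn (criticalityIntegral b γ) (Ico 0 (1 / b 0)) := by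
  intro ξa ha ξb hb hab
  calc criticalityIntegral b γ ξa ≤ (ξa / ξb) ^ 2 * criticalityIntegral b γ ξb :=
        criticalityIntegral_le_sq_div_mul hb_nonneg hb_anti hb0 ha.1 hab hb
    _ ≤ criticalityIntegral b γ ξb :=
        mul_le_of_le_one_left (criticalityIntegral_nonneg γ ξb)
          (pow_le_one₀ (div_nonneg ha.1 hb.1) (div_le_one_of_le₀ hab hb.1))

lemma criticalityIntegral_lt_of_lt (hb_nonneg : ∀ x, 0 ≤ x → 0 ≤ b x)
    (hb_anti : AntitoneOn b (Ici 0)) (hb0 : 0 < b 0) {γ ξa ξb : ℝ} (ha : 0 ≤ ξa)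
    (hb : ξb ∈ Ico 0 (1 / b 0)) (hab : ξa < ξb) (hpos : 0 < criticalityIntegral b γ ξa) :
    criticalityIntegral b γ ξa < criticalityIntegral b γ ξb := by
  have hle := criticalityIntegral_le_sq_div_mul hb_nonneg hb_anti hb0 (γ := γ) ha hab.le hb
  have hr : (ξa / ξb) ^ 2 < 1 :=
    pow_lt_one₀ (div_nonneg ha hb.1) ((div_lt_one (ha.trans_lt hab)).2 hab) two_ne_zero
  nlinarith [criticalityIntegral_nonneg (b := b) γ ξb, sq_nonneg (ξa / ξb)]

lemma eq_of_criticalityIntegral_eq (hb_nonneg : ∀ x, 0 ≤ x → 0 ≤ b x)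
    (hb_anti : AntitoneOn b (Ici 0)) (hb0 : 0 < b 0) {γ ξa ξb : ℝ} (ha : ξa ∈ Ico 0 (1 / b 0))
    (hb : ξb ∈ Ico 0 (1 / b 0)) (hpos : 0 < criticalityIntegral b γ ξa)
    (h : criticalityIntegral b γ ξa = criticalityIntegral b γ ξb) : ξa = ξb := by
  rcases lt_trichotomy ξa ξb with hab | hab | hab
  · exact absurd h (criticalityIntegral_lt_of_lt hb_nonneg hb_anti hb0 ha.1 hb hab hpos).ne
  · exact hab
  · exact absurd h (criticalityIntegral_lt_of_lt hb_nonneg hb_anti hb0 hb.1 ha hab (h ▸ hpos)).ne'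

lemma continuousAt_criticalityIntegral (hb_nonneg : ∀ x, 0 ≤ x → 0 ≤ b x)
    (hb_anti : AntitoneOn b (Ici 0)) (hb0 : 0 < b 0) {γ ξ : ℝ} (hξ : ξ ∈ Ico 0 (1 / b 0))
    (hγ : 0 < γ) : ContinuousAt (fun γ => criticalityIntegral b γ ξ) γ := by
  have hT : (0:ℝ) ≤ γ + 1 := by linarith
  have hprim := intervalIntegral.continuousOn_primitive_interval (μ := volume) (by
    rw [uIcc_of_le hT]; exact integrableOn_Icc_criticalityIntegrand hb_nonneg hb_anti hb0 hξ _)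
  rw [uIcc_of_le hT] at hprim
  refine (hprim.continuousAt (Icc_mem_nhds hγ (by linarith))).congr ?_
  filter_upwards [eventually_gt_nhds hγ] with t ht
  exact intervalIntegral.integral_of_le ht.le

end Criticality

theorem xi_antitone_continuous_general
    -- the bulk function b : [0,∞) → [0,∞), non-increasing, b(0) > 0,
    -- Lipschitz continuous at 0, with ∫_0^∞ b(x) dx < ∞
    (b : ℝ → ℝ)
    (hb_nonneg : ∀ x, 0 ≤ x → 0 ≤ b x)
    (hb_anti : AntitoneOn b (Set.Ici 0))
    (hb0 : 0 < b 0)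
    -- ξ(γ) : the unique solution in (0, 1/b(0)) of ∫_0^γ (b(x)ξ/(1-b(x)ξ))² dx = 1
    (ξfun : ℝ → ℝ)
    (hξfun : ∀ γ : ℝ, 0 < γ → ξfun γ ∈ Set.Ioo 0 (1 / b 0) ∧
      ∫ x in Set.Ioc (0:ℝ) γ, (b x * ξfun γ / (1 - b x * ξfun γ)) ^ 2 = 1)
 :
    -- Conclusion: ξ is monotonically decreasing and continuous on (0,∞)
    AntitoneOn ξfun (Set.Ioi 0) ∧ ContinuousOn ξfun (Set.Ioi 0) := by
  have hdom : ∀ γ, 0 < γ → ξfun γ ∈ Ico 0 (1 / b 0) :=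
    fun γ hγ => Ioo_subset_Ico_self (hξfun γ hγ).1
  have hsol : ∀ γ, 0 < γ → criticalityIntegral b γ (ξfun γ) = 1 := fun γ hγ => (hξfun γ hγ).2
  refine ⟨fun γ₁ h₁ γ₂ h₂ h₁₂ => not_lt.1 fun hlt => ?_, fun γ₀ h₀ => ?_⟩
  · refine lt_irrefl (1 : ℝ) ?_
    calc 1 = criticalityIntegral b γ₁ (ξfun γ₁) := (hsol γ₁ h₁).symm
      _ < criticalityIntegral b γ₁ (ξfun γ₂) :=
        criticalityIntegral_lt_of_lt hb_nonneg hb_anti hb0 (hdom γ₁ h₁).1 (hdom γ₂ h₂) hlt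
          (hsol γ₁ h₁ ▸ one_pos)
      _ ≤ criticalityIntegral b γ₂ (ξfun γ₂) :=
        criticalityIntegral_mono_left hb_nonneg hb_anti hb0 (hdom γ₂ h₂) h₁₂
      _ = 1 := hsol γ₂ h₂
  · have hγ : ∀ᶠ γ in 𝓝 γ₀, 0 < γ := eventually_gt_nhds h₀
    refine (continuousAt_of_eventually_apply_eq (F := criticalityIntegral b) (c := 1)
      (isOpen_Ioo.mem_nhds (hξfun γ₀ h₀).1)
      (Eventually.of_forall fun γ =>
        (monotoneOn_criticalityIntegral hb_nonneg hb_anti hb0 γ).mono Ioo_subset_Ico_self)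
      (hγ.mono fun γ hγ => (hξfun γ hγ).1) (hγ.mono hsol)
      (fun a ha => continuousAt_criticalityIntegral hb_nonneg hb_anti hb0
        (Ioo_subset_Ico_self ha) h₀)
      (fun a ha h => eq_of_criticalityIntegral_eq hb_nonneg hb_anti hb0 (Ioo_subset_Ico_self ha)
        (hdom γ₀ h₀) (h ▸ one_pos) (h.trans (hsol γ₀ h₀).symm))).continuousWithinAt

theorem xi_antitone_continuous
    -- the bulk function b : [0,∞) → [0,∞), non-increasing, b(0) > 0,
    -- Lipschitz continuous at 0, with ∫_0^∞ b(x) dx < ∞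
    (b : ℝ → ℝ)
    (hb_nonneg : ∀ x, 0 ≤ x → 0 ≤ b x)
    (hb_anti : AntitoneOn b (Set.Ici 0))
    (hb0 : 0 < b 0)
    (hb_lip : ∃ L δ : ℝ, 0 < δ ∧ ∀ x ∈ Set.Icc (0:ℝ) δ, |b x - b 0| ≤ L * x)
    (hb_int : IntegrableOn b (Set.Ici 0))
    -- ξ(γ) : the unique solution in (0, 1/b(0)) of ∫_0^γ (b(x)ξ/(1-b(x)ξ))² dx = 1
    (ξfun : ℝ → ℝ)
    (hξfun : ∀ γ : ℝ, 0 < γ → ξfun γ ∈ Set.Ioo 0 (1 / b 0) ∧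
      ∫ x in Set.Ioc (0:ℝ) γ, (b x * ξfun γ / (1 - b x * ξfun γ)) ^ 2 = 1)
 :
    -- Conclusion: ξ is monotonically decreasing and continuous on (0,∞)
    AntitoneOn ξfun (Set.Ioi 0) ∧ ContinuousOn ξfun (Set.Ioi 0) :=
  xi_antitone_continuous_general b hb_nonneg hb_anti hb0 ξfun hξfun
end
end

section
/- Convergence of the criticality parameter to its infinite-horizon limit (Lemma 1, part (b)): As γ → ∞, ξ(γ) converges to ξ(∞), where ξ(∞) is the unique solution ξ* ∈ (0, 1/b(0)) of ∫_0^∞ (b(x)ξ*/(1 − b(x)ξ*))^2 dx = 1. -/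
/-!
Write `F(s, ξ) = ∫_s (b ξ / (1 - b ξ))²`. Since `u / (1 - u) = u · (1 - u)⁻¹` with `(1 - u)⁻¹`
increasing on `[0, 1)`, `F(s, ξ₂) ≥ (ξ₂ / ξ₁)² F(s, ξ₁)` for `ξ₁ ≤ ξ₂`. Comparing the equations
`F((0, γ], ξ(γ)) = 1 = F((0, ∞), ξ(∞))` this way gives `ξ(∞) ≤ ξ(γ)`. Conversely, for `c > ξ(∞)`
we get `F((0, ∞), c) > 1`, hence `F((0, γ], c) > 1` for large `γ`, which forces `ξ(γ) < c`.
-/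

open MeasureTheory ProbabilityTheory Filter Set
open scoped RealInnerProductSpace ENNReal NNReal

noncomputable section

lemma sq_div_one_sub_mul_le {t B ξ : ℝ} (ht : t ∈ Icc 0 B) (hξ : 0 ≤ ξ) (hBξ : B * ξ < 1) :
    (t * ξ / (1 - t * ξ)) ^ 2 ≤ B * (ξ / (1 - B * ξ)) ^ 2 * t := by
  obtain ⟨ht0, htB⟩ := ht
  have hden : 0 < 1 - B * ξ := by linarith
  have hden_le : 1 - B * ξ ≤ 1 - t * ξ := by nlinarith
  calc (t * ξ / (1 - t * ξ)) ^ 2 ≤ (t * ξ / (1 - B * ξ)) ^ 2 := by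
        gcongr
        exact div_nonneg (mul_nonneg ht0 hξ) (by linarith)
    _ = t * (ξ / (1 - B * ξ)) ^ 2 * t := by ring
    _ ≤ B * (ξ / (1 - B * ξ)) ^ 2 * t := by gcongr

lemma sq_div_mul_sq_div_one_sub_mul_le {t ξ₁ ξ₂ : ℝ} (ht : 0 ≤ t) (hξ₁ : 0 < ξ₁) (h12 : ξ₁ ≤ ξ₂)
    (htξ₂ : t * ξ₂ < 1) :
    (ξ₂ / ξ₁) ^ 2 * (t * ξ₁ / (1 - t * ξ₁)) ^ 2 ≤ (t * ξ₂ / (1 - t * ξ₂)) ^ 2 := by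
  have hnum : 0 ≤ t * ξ₂ := mul_nonneg ht (hξ₁.le.trans h12)
  have hden : 0 < 1 - t * ξ₂ := by linarith
  have hden_le : 1 - t * ξ₂ ≤ 1 - t * ξ₁ := by nlinarith
  have hrescale : ξ₂ / ξ₁ * (t * ξ₁ / (1 - t * ξ₁)) = t * ξ₂ / (1 - t * ξ₁) := by
    field_simp
  rw [← mul_pow, hrescale]
  gcongr
  exact div_nonneg hnum (by linarith)

variable {μ : Measure ℝ} {b : ℝ → ℝ} {B ξ ξ₁ ξ₂ : ℝ} {s t : Set ℝ}

lemma integrableOn_sq_div_one_sub_mul (hb : IntegrableOn b s μ) (hs : MeasurableSet s)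
    (hbB : ∀ x ∈ s, b x ∈ Icc 0 B) (hξ : 0 ≤ ξ) (hBξ : B * ξ < 1) :
    IntegrableOn (fun x ↦ (b x * ξ / (1 - b x * ξ)) ^ 2) s μ := by
  refine (hb.const_mul (B * (ξ / (1 - B * ξ)) ^ 2)).mono' ?_ ?_
  · exact (by fun_prop : Measurable fun y : ℝ ↦ (y * ξ / (1 - y * ξ)) ^ 2).comp_aemeasurable
      hb.aemeasurable |>.aestronglyMeasurable
  · refine ae_restrict_of_forall_mem hs fun x hx ↦ ?_
    rw [Real.norm_of_nonneg (sq_nonneg _)]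
    exact sq_div_one_sub_mul_le (hbB x hx) hξ hBξ

lemma sq_div_mul_setIntegral_le (hb : IntegrableOn b t μ) (hs : MeasurableSet s)
    (ht : MeasurableSet t) (hst : s ⊆ t) (hbB : ∀ x ∈ t, b x ∈ Icc 0 B) (hξ₁ : 0 < ξ₁)
    (h12 : ξ₁ ≤ ξ₂) (hBξ₂ : B * ξ₂ < 1) :
    (ξ₂ / ξ₁) ^ 2 * ∫ x in s, (b x * ξ₁ / (1 - b x * ξ₁)) ^ 2 ∂μ ≤
      ∫ x in t, (b x * ξ₂ / (1 - b x * ξ₂)) ^ 2 ∂μ := by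
  have hBξ₁ : B * ξ₁ < 1 := by rcases le_or_gt 0 B with hB | hB <;> nlinarith
  have hf₁ := integrableOn_sq_div_one_sub_mul (hb.mono_set hst) hs (fun x hx ↦ hbB x (hst hx))
    hξ₁.le hBξ₁
  have hf₂ := integrableOn_sq_div_one_sub_mul hb ht hbB (hξ₁.le.trans h12) hBξ₂
  rw [← integral_const_mul]
  calc ∫ x in s, (ξ₂ / ξ₁) ^ 2 * (b x * ξ₁ / (1 - b x * ξ₁)) ^ 2 ∂μ
      ≤ ∫ x in s, (b x * ξ₂ / (1 - b x * ξ₂)) ^ 2 ∂μ := by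
        refine setIntegral_mono_on (hf₁.const_mul _) (hf₂.mono_set hst) hs fun x hx ↦ ?_
        obtain ⟨hbx, hbxB⟩ := hbB x (hst hx)
        exact sq_div_mul_sq_div_one_sub_mul_le hbx hξ₁ h12
          (by nlinarith [hξ₁.le.trans h12])
    _ ≤ ∫ x in t, (b x * ξ₂ / (1 - b x * ξ₂)) ^ 2 ∂μ :=
        setIntegral_mono_set hf₂ (ae_of_all _ fun _ ↦ sq_nonneg _) hst.eventuallyLE

lemma le_of_setIntegral_Ioc_eq_one (hb : IntegrableOn b (Ici 0) μ)
    (hbB : ∀ x ∈ Ici (0:ℝ), b x ∈ Icc 0 B) {γ : ℝ} (hξ₁ : 0 < ξ₁) (hBξ₂ : B * ξ₂ < 1)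
    (heq₁ : ∫ x in Ioc 0 γ, (b x * ξ₁ / (1 - b x * ξ₁)) ^ 2 ∂μ = 1)
    (heq₂ : ∫ x in Ici 0, (b x * ξ₂ / (1 - b x * ξ₂)) ^ 2 ∂μ = 1) :
    ξ₂ ≤ ξ₁ := by
  by_contra! h12
  have hcmp := sq_div_mul_setIntegral_le (s := Ioc 0 γ) hb measurableSet_Ioc measurableSet_Ici
    (fun _ hx ↦ hx.1.le) hbB hξ₁ h12.le hBξ₂
  rw [heq₁, heq₂, mul_one] at hcmp
  have : 1 < (ξ₂ / ξ₁) ^ 2 := one_lt_pow₀ ((one_lt_div hξ₁).2 h12) two_ne_zero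
  linarith

lemma eventually_lt_of_setIntegral_Ici_eq_one [NullSingletonClass μ] (hb : IntegrableOn b (Ici 0) μ)
    (hbB : ∀ x ∈ Ici (0:ℝ), b x ∈ Icc 0 B) (hξ₁ : 0 < ξ₁) (h12 : ξ₁ < ξ₂) (hBξ₂ : B * ξ₂ < 1)
    (heq₁ : ∫ x in Ici 0, (b x * ξ₁ / (1 - b x * ξ₁)) ^ 2 ∂μ = 1) :
    ∀ᶠ γ in atTop, ∀ ξ, B * ξ < 1 →
      ∫ x in Ioc 0 γ, (b x * ξ / (1 - b x * ξ)) ^ 2 ∂μ = 1 → ξ < ξ₂ := by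
  have hgt : 1 < ∫ x in Ici 0, (b x * ξ₂ / (1 - b x * ξ₂)) ^ 2 ∂μ := by
    have hcmp := sq_div_mul_setIntegral_le hb measurableSet_Ici measurableSet_Ici subset_rfl hbB
      hξ₁ h12.le hBξ₂
    rw [heq₁, mul_one] at hcmp
    exact (one_lt_pow₀ ((one_lt_div hξ₁).2 h12) two_ne_zero).trans_le hcmp
  have htendsto : Tendsto (fun γ ↦ ∫ x in Ioc 0 γ, (b x * ξ₂ / (1 - b x * ξ₂)) ^ 2 ∂μ) atTop
      (nhds (∫ x in Ici 0, (b x * ξ₂ / (1 - b x * ξ₂)) ^ 2 ∂μ)) := by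
    have hf := integrableOn_sq_div_one_sub_mul hb measurableSet_Ici hbB (hξ₁.trans h12).le hBξ₂
    rw [integral_Ici_eq_integral_Ioi]
    refine (intervalIntegral_tendsto_integral_Ioi 0 (hf.mono_set Ioi_subset_Ici_self)
      tendsto_id).congr' ?_
    filter_upwards [eventually_ge_atTop 0] with γ hγ using intervalIntegral.integral_of_le hγ
  filter_upwards [htendsto.eventually (lt_mem_nhds hgt)] with γ hγ ξ hBξ heq
  by_contra! h2
  have hIoc : Ioc 0 γ ⊆ Ici 0 := fun _ hx ↦ hx.1.le
  have hcmp := sq_div_mul_setIntegral_le (hb.mono_set hIoc) measurableSet_Ioc measurableSet_Ioc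
    subset_rfl (fun x hx ↦ hbB x (hIoc hx)) (hξ₁.trans h12) h2 hBξ
  rw [heq] at hcmp
  have : 1 ≤ (ξ / ξ₂) ^ 2 := one_le_pow₀ ((one_le_div (hξ₁.trans h12)).2 h2)
  nlinarith

theorem xi_tendsto_xi_inf_general
    -- the bulk function b : [0,∞) → [0,∞), non-increasing, b(0) > 0,
    -- Lipschitz continuous at 0, with ∫_0^∞ b(x) dx < ∞
    (b : ℝ → ℝ)
    (hb_nonneg : ∀ x, 0 ≤ x → 0 ≤ b x)
    (hb_anti : AntitoneOn b (Set.Ici 0))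
    (hb0 : 0 < b 0)
    (hb_int : IntegrableOn b (Set.Ici 0))
    -- ξ(γ) : the unique solution in (0, 1/b(0)) of ∫_0^γ (b(x)ξ/(1-b(x)ξ))² dx = 1
    (ξfun : ℝ → ℝ)
    (hξfun : ∀ γ : ℝ, 0 < γ → ξfun γ ∈ Set.Ioo 0 (1 / b 0) ∧
      ∫ x in Set.Ioc (0:ℝ) γ, (b x * ξfun γ / (1 - b x * ξfun γ)) ^ 2 = 1)
    -- the critical parameter ξ(∞)
    (ξinf : ℝ) (hξ_mem : ξinf ∈ Set.Ioo 0 (1 / b 0))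
    (hξ_eq : ∫ x in Set.Ici (0:ℝ), (b x * ξinf / (1 - b x * ξinf)) ^ 2 = 1)
 :
    -- Conclusion: ξ(γ) → ξ(∞) as γ → ∞
    Tendsto ξfun atTop (nhds ξinf) := by
  have hbB : ∀ x ∈ Ici (0:ℝ), b x ∈ Icc 0 (b 0) :=
    fun x hx ↦ ⟨hb_nonneg x hx, hb_anti self_mem_Ici hx hx⟩
  have hb0_mul : ∀ {ξ}, ξ < 1 / b 0 → b 0 * ξ < 1 := fun h ↦ by rwa [lt_div_iff₀' hb0] at h
  rw [tendsto_order]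
  refine ⟨fun a ha ↦ ?_, fun a ha ↦ ?_⟩
  · filter_upwards [eventually_gt_atTop 0] with γ hγ
    obtain ⟨hξγ, heqγ⟩ := hξfun γ hγ
    exact ha.trans_le
      (le_of_setIntegral_Ioc_eq_one hb_int hbB hξγ.1 (hb0_mul hξ_mem.2) heqγ hξ_eq)
  · obtain ⟨c, hξc, hc⟩ := exists_between (lt_min ha hξ_mem.2)
    filter_upwards [eventually_lt_of_setIntegral_Ici_eq_one hb_int hbB hξ_mem.1 hξc
      (hb0_mul (hc.trans_le (min_le_right _ _))) hξ_eq, eventually_gt_atTop 0] with γ hlt hγ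
    obtain ⟨hξγ, heqγ⟩ := hξfun γ hγ
    exact (hlt _ (hb0_mul hξγ.2) heqγ).trans (hc.trans_le (min_le_left _ _))

theorem xi_tendsto_xi_inf
    -- the bulk function b : [0,∞) → [0,∞), non-increasing, b(0) > 0,
    -- Lipschitz continuous at 0, with ∫_0^∞ b(x) dx < ∞
    (b : ℝ → ℝ)
    (hb_nonneg : ∀ x, 0 ≤ x → 0 ≤ b x)
    (hb_anti : AntitoneOn b (Set.Ici 0))
    (hb0 : 0 < b 0)
    (hb_lip : ∃ L δ : ℝ, 0 < δ ∧ ∀ x ∈ Set.Icc (0:ℝ) δ, |b x - b 0| ≤ L * x)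
    (hb_int : IntegrableOn b (Set.Ici 0))
    -- ξ(γ) : the unique solution in (0, 1/b(0)) of ∫_0^γ (b(x)ξ/(1-b(x)ξ))² dx = 1
    (ξfun : ℝ → ℝ)
    (hξfun : ∀ γ : ℝ, 0 < γ → ξfun γ ∈ Set.Ioo 0 (1 / b 0) ∧
      ∫ x in Set.Ioc (0:ℝ) γ, (b x * ξfun γ / (1 - b x * ξfun γ)) ^ 2 = 1)
    -- the critical parameter ξ(∞)
    (ξinf : ℝ) (hξ_mem : ξinf ∈ Set.Ioo 0 (1 / b 0))
    (hξ_eq : ∫ x in Set.Ici (0:ℝ), (b x * ξinf / (1 - b x * ξinf)) ^ 2 = 1)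
 :
    -- Conclusion: ξ(γ) → ξ(∞) as γ → ∞
    Tendsto ξfun atTop (nhds ξinf) :=
  xi_tendsto_xi_inf_general b hb_nonneg hb_anti hb0 hb_int ξfun hξfun ξinf hξ_mem hξ_eq

end
end

section
/- Continuity of ψ along the criticality parameter (Lemma 1, part (c)): As γ → ∞, ψ(1/ξ(γ)) converges to ψ(1/ξ(∞)), where ψ(y) = y(1 + ∫_0^∞ b(x)/(y − b(x)) dx) for y > b(0). -/
/-!
Write `f_ξ = (b ξ / (1 - b ξ))²`. Since `f_ξ / ξ²` is increasing in `ξ`, we get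
`s² ∫ f_t ≤ t² ∫ f_s` for `t ≤ s`. On `(0, γ]` this forces `ξ(∞) ≤ ξ(γ)` and
`ξ(γ)² ∫_0^γ f_{ξ(∞)} ≤ ξ(∞)²`; as `∫_0^γ f_{ξ(∞)} → 1`, it follows that `ξ(γ) → ξ(∞)`.
Finally `ψ` is continuous on `(b(0), ∞)` by dominated convergence, with the dominating
function `|b| / (y₀ - b(0))` for any `y₀ ∈ (b(0), y)`.
-/

open MeasureTheory ProbabilityTheory Filter Set
open scoped RealInnerProductSpace ENNReal NNReal

noncomputable section

/-- `ψ(y) = y (1 + ∫_0^∞ b(x)/(y - b(x)) dx)`. -/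
def psiFn (b : ℝ → ℝ) (y : ℝ) : ℝ :=
  y * (1 + ∫ x in Set.Ici (0:ℝ), b x / (y - b x))

def criticalIntegrand {α : Type*} (b : α → ℝ) (ξ : ℝ) (x : α) : ℝ :=
  (b x * ξ / (1 - b x * ξ)) ^ 2

lemma sq_mul_sq_div_one_sub_le {u t s : ℝ} (hu : 0 ≤ u) (hts : t ≤ s) (hus : u * s < 1) :
    s ^ 2 * (u * t / (1 - u * t)) ^ 2 ≤ t ^ 2 * (u * s / (1 - u * s)) ^ 2 := by
  have hs : 0 < 1 - u * s := by linarith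
  have hst : 1 - u * s ≤ 1 - u * t := by nlinarith [mul_le_mul_of_nonneg_left hts hu]
  calc s ^ 2 * (u * t / (1 - u * t)) ^ 2
        = (u * t * s) ^ 2 / (1 - u * t) ^ 2 := by rw [div_pow]; ring
    _ ≤ (u * t * s) ^ 2 / (1 - u * s) ^ 2 := by gcongr
    _ = t ^ 2 * (u * s / (1 - u * s)) ^ 2 := by rw [div_pow]; ring

lemma sq_mul_integral_criticalIntegrand_le {α : Type*} [MeasurableSpace α] {μ : Measure α}
    {b : α → ℝ} {t s : ℝ} (hts : t ≤ s) (hb : ∀ᵐ x ∂μ, 0 ≤ b x ∧ b x * s < 1)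
    (ht : Integrable (criticalIntegrand b t) μ) (hs : Integrable (criticalIntegrand b s) μ) :
    s ^ 2 * ∫ x, criticalIntegrand b t x ∂μ ≤ t ^ 2 * ∫ x, criticalIntegrand b s x ∂μ := by
  rw [← integral_const_mul, ← integral_const_mul]
  exact integral_mono_ae (ht.const_mul _) (hs.const_mul _)
    (hb.mono fun x hx => sq_mul_sq_div_one_sub_le hx.1 hts hx.2)

lemma tendsto_setIntegral_Ioc_atTop {f : ℝ → ℝ} {a : ℝ} (hf : IntegrableOn f (Ioi a)) :
    Tendsto (fun γ => ∫ x in Ioc a γ, f x) atTop (nhds (∫ x in Ioi a, f x)) :=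
  (intervalIntegral_tendsto_integral_Ioi a hf tendsto_id).congr'
    ((eventually_ge_atTop a).mono fun _ h => intervalIntegral.integral_of_le h)

section Bulk

variable {b : ℝ → ℝ}

lemma AntitoneOn.mul_lt_one_of_mem_Ioo (hb_anti : AntitoneOn b (Ici 0)) (hb0 : 0 < b 0)
    {ξ x : ℝ} (hξ : ξ ∈ Ioo 0 (1 / b 0)) (hx : 0 ≤ x) : b x * ξ < 1 :=
  calc b x * ξ ≤ b 0 * ξ := mul_le_mul_of_nonneg_right (hb_anti self_mem_Ici hx hx) hξ.1.le
    _ < 1 := by rw [← lt_div_iff₀' hb0]; exact hξ.2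

lemma le_xi_and_sq_mul_setIntegral_le (hb_nonneg : ∀ x, 0 ≤ x → 0 ≤ b x)
    (hb_anti : AntitoneOn b (Ici 0)) (hb0 : 0 < b 0) {ξ ξinf γ : ℝ}
    (hξ : ξ ∈ Ioo 0 (1 / b 0)) (hξ_eq : ∫ x in Ioc 0 γ, criticalIntegrand b ξ x = 1)
    (hξinf : ξinf ∈ Ioo 0 (1 / b 0)) (hξinf_eq : ∫ x in Ici 0, criticalIntegrand b ξinf x = 1) :
    ξinf ≤ ξ ∧ ξ ^ 2 * ∫ x in Ioc 0 γ, criticalIntegrand b ξinf x ≤ ξinf ^ 2 := by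
  have hb : ∀ {s}, s ∈ Ioo 0 (1 / b 0) →
      ∀ᵐ x ∂(volume.restrict (Ioc 0 γ)), 0 ≤ b x ∧ b x * s < 1 := fun hs =>
    ae_restrict_of_forall_mem measurableSet_Ioc fun x hx =>
      ⟨hb_nonneg x hx.1.le, hb_anti.mul_lt_one_of_mem_Ioo hb0 hs hx.1.le⟩
  have hint : IntegrableOn (criticalIntegrand b ξ) (Ioc 0 γ) :=
    Integrable.of_integral_ne_zero (by rw [hξ_eq]; exact one_ne_zero)
  have hint_inf : IntegrableOn (criticalIntegrand b ξinf) (Ici 0) :=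
    Integrable.of_integral_ne_zero (by rw [hξinf_eq]; exact one_ne_zero)
  have hIoc : Ioc (0 : ℝ) γ ⊆ Ici 0 := fun x hx => hx.1.le
  have hI_le : ∫ x in Ioc 0 γ, criticalIntegrand b ξinf x ≤ 1 :=
    hξinf_eq ▸ setIntegral_mono_set hint_inf (ae_of_all _ fun _ => sq_nonneg _) hIoc.eventuallyLE
  have hle : ξinf ≤ ξ := by
    by_contra! hlt
    have := sq_mul_integral_criticalIntegrand_le hlt.le (hb hξinf) hint (hint_inf.mono_set hIoc)
    rw [hξ_eq] at this
    nlinarith [hξ.1]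
  refine ⟨hle, ?_⟩
  have := sq_mul_integral_criticalIntegrand_le hle (hb hξ) (hint_inf.mono_set hIoc) hint
  rwa [hξ_eq, mul_one] at this

theorem tendsto_one_div_xi (hb_nonneg : ∀ x, 0 ≤ x → 0 ≤ b x)
    (hb_anti : AntitoneOn b (Ici 0)) (hb0 : 0 < b 0) (ξfun : ℝ → ℝ)
    (hξfun : ∀ γ : ℝ, 0 < γ → ξfun γ ∈ Ioo 0 (1 / b 0) ∧
      ∫ x in Ioc 0 γ, criticalIntegrand b (ξfun γ) x = 1)
    (ξinf : ℝ) (hξinf : ξinf ∈ Ioo 0 (1 / b 0))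
    (hξinf_eq : ∫ x in Ici 0, criticalIntegrand b ξinf x = 1) :
    Tendsto (fun γ => 1 / ξfun γ) atTop (nhds (1 / ξinf)) := by
  have hint_inf : IntegrableOn (criticalIntegrand b ξinf) (Ici 0) :=
    Integrable.of_integral_ne_zero (by rw [hξinf_eq]; exact one_ne_zero)
  have hI : Tendsto (fun γ => ∫ x in Ioc 0 γ, criticalIntegrand b ξinf x) atTop (nhds 1) := by
    have := tendsto_setIntegral_Ioc_atTop (hint_inf.mono_set Ioi_subset_Ici_self)
    rwa [← integral_Ici_eq_integral_Ioi, hξinf_eq] at this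
  have hbounds : ∀ᶠ γ in atTop,
      (1 / ξinf) ^ 2 * (∫ x in Ioc 0 γ, criticalIntegrand b ξinf x) ≤ (1 / ξfun γ) ^ 2 ∧
        (1 / ξfun γ) ^ 2 ≤ (1 / ξinf) ^ 2 := by
    filter_upwards [eventually_gt_atTop 0] with γ hγ
    obtain ⟨hξ, hξ_eq⟩ := hξfun γ hγ
    obtain ⟨hle, hsq_le⟩ :=
      le_xi_and_sq_mul_setIntegral_le hb_nonneg hb_anti hb0 hξ hξ_eq hξinf hξinf_eq
    have hξ0 := hξ.1
    have hξinf0 := hξinf.1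
    constructor
    · calc (1 / ξinf) ^ 2 * (∫ x in Ioc 0 γ, criticalIntegrand b ξinf x)
          = ξfun γ ^ 2 * (∫ x in Ioc 0 γ, criticalIntegrand b ξinf x) / (ξinf ^ 2 * ξfun γ ^ 2) := by
            field_simp
        _ ≤ ξinf ^ 2 / (ξinf ^ 2 * ξfun γ ^ 2) := by gcongr
        _ = (1 / ξfun γ) ^ 2 := by field_simp
    · gcongr
  have hsq : Tendsto (fun γ => (1 / ξfun γ) ^ 2) atTop (nhds ((1 / ξinf) ^ 2)) :=
    tendsto_of_tendsto_of_tendsto_of_le_of_le'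
      (by simpa only [mul_one] using hI.const_mul ((1 / ξinf) ^ 2)) tendsto_const_nhds
      (hbounds.mono fun _ h => h.1) (hbounds.mono fun _ h => h.2)
  have hpos : ∀ᶠ γ in atTop, √((1 / ξfun γ) ^ 2) = 1 / ξfun γ :=
    (eventually_gt_atTop 0).mono fun γ hγ => Real.sqrt_sq (one_div_nonneg.2 (hξfun γ hγ).1.1.le)
  rw [← Real.sqrt_sq (one_div_nonneg.2 hξinf.1.le)]
  exact hsq.sqrt.congr' hpos

theorem continuousAt_psiFn (hb_anti : AntitoneOn b (Ici 0)) (hb_int : IntegrableOn b (Ici 0))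
    {y : ℝ} (hy : b 0 < y) : ContinuousAt (psiFn b) y := by
  obtain ⟨y₀, hy₀, hy₀y⟩ := exists_between hy
  have hbm := hb_int.aestronglyMeasurable
  have hint : ContinuousAt (fun y => ∫ x in Ici 0, b x / (y - b x)) y := by
    refine continuousAt_of_dominated (bound := fun x => ‖b x‖ / (y₀ - b 0))
      (Eventually.of_forall fun _ => hbm.div₀ (aestronglyMeasurable_const.sub hbm)) ?_
      (hb_int.norm.div_const _) ?_
    · filter_upwards [Ioi_mem_nhds hy₀y] with y' (hy' : y₀ < y')
      refine ae_restrict_of_forall_mem measurableSet_Ici fun x hx => ?_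
      have hbx : b x ≤ b 0 := hb_anti self_mem_Ici hx hx
      rw [norm_div, Real.norm_of_nonneg (by linarith : 0 ≤ y' - b x)]
      gcongr
    · refine ae_restrict_of_forall_mem measurableSet_Ici fun x hx => ?_
      have hbx : b x ≤ b 0 := hb_anti self_mem_Ici hx hx
      exact continuousAt_const.div (continuousAt_id.sub continuousAt_const) (by linarith)
  exact continuousAt_id.mul (continuousAt_const.add hint)

end Bulk

theorem psi_xi_tendsto_general
    -- the bulk function b : [0,∞) → [0,∞), non-increasing, b(0) > 0,
    -- Lipschitz continuous at 0, with ∫_0^∞ b(x) dx < ∞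
    (b : ℝ → ℝ)
    (hb_nonneg : ∀ x, 0 ≤ x → 0 ≤ b x)
    (hb_anti : AntitoneOn b (Set.Ici 0))
    (hb0 : 0 < b 0)
    (hb_int : IntegrableOn b (Set.Ici 0))
    -- ξ(γ) : the unique solution in (0, 1/b(0)) of ∫_0^γ (b(x)ξ/(1-b(x)ξ))² dx = 1
    (ξfun : ℝ → ℝ)
    (hξfun : ∀ γ : ℝ, 0 < γ → ξfun γ ∈ Set.Ioo 0 (1 / b 0) ∧
      ∫ x in Set.Ioc (0:ℝ) γ, (b x * ξfun γ / (1 - b x * ξfun γ)) ^ 2 = 1)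
    -- the critical parameter ξ(∞)
    (ξinf : ℝ) (hξ_mem : ξinf ∈ Set.Ioo 0 (1 / b 0))
    (hξ_eq : ∫ x in Set.Ici (0:ℝ), (b x * ξinf / (1 - b x * ξinf)) ^ 2 = 1)
 :
    -- Conclusion: ψ(1/ξ(γ)) → ψ(1/ξ(∞)) as γ → ∞
    Tendsto (fun γ : ℝ => psiFn b (1 / ξfun γ)) atTop (nhds (psiFn b (1 / ξinf))) := by
  have hy : b 0 < 1 / ξinf := (lt_one_div hξ_mem.1 hb0).1 hξ_mem.2
  exact (continuousAt_psiFn hb_anti hb_int hy).tendsto.comp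
    (tendsto_one_div_xi hb_nonneg hb_anti hb0 ξfun hξfun ξinf hξ_mem hξ_eq)

theorem psi_xi_tendsto
    -- the bulk function b : [0,∞) → [0,∞), non-increasing, b(0) > 0,
    -- Lipschitz continuous at 0, with ∫_0^∞ b(x) dx < ∞
    (b : ℝ → ℝ)
    (hb_nonneg : ∀ x, 0 ≤ x → 0 ≤ b x)
    (hb_anti : AntitoneOn b (Set.Ici 0))
    (hb0 : 0 < b 0)
    (hb_lip : ∃ L δ : ℝ, 0 < δ ∧ ∀ x ∈ Set.Icc (0:ℝ) δ, |b x - b 0| ≤ L * x)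
    (hb_int : IntegrableOn b (Set.Ici 0))
    -- ξ(γ) : the unique solution in (0, 1/b(0)) of ∫_0^γ (b(x)ξ/(1-b(x)ξ))² dx = 1
    (ξfun : ℝ → ℝ)
    (hξfun : ∀ γ : ℝ, 0 < γ → ξfun γ ∈ Set.Ioo 0 (1 / b 0) ∧
      ∫ x in Set.Ioc (0:ℝ) γ, (b x * ξfun γ / (1 - b x * ξfun γ)) ^ 2 = 1)
    -- the critical parameter ξ(∞)
    (ξinf : ℝ) (hξ_mem : ξinf ∈ Set.Ioo 0 (1 / b 0))
    (hξ_eq : ∫ x in Set.Ici (0:ℝ), (b x * ξinf / (1 - b x * ξinf)) ^ 2 = 1)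
 :
    -- Conclusion: ψ(1/ξ(γ)) → ψ(1/ξ(∞)) as γ → ∞
    Tendsto (fun γ : ℝ => psiFn b (1 / ξfun γ)) atTop (nhds (psiFn b (1 / ξinf))) :=
  psi_xi_tendsto_general b hb_nonneg hb_anti hb0 hb_int ξfun hξfun ξinf hξ_mem hξ_eq

end
end

section
/- Lipschitz-type stability of the criticality integral (equation (16) in the proof of Lemma 1): For every γ_0 > 0 there exists a constant c' > 0 (depending only on b and γ_0) such that for all γ, γ' ≥ γ_0, |∫_0^γ (b(x)ξ(γ')/(1 − b(x)ξ(γ')))^2 dx − 1| ≤ c' |γ − γ'|. -/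
/-!
Write `t = 1 - b(0) ξ(γ')` for the gap below the singularity of the integrand. Since `b` is
Lipschitz at `0`, on an interval `(0, x₁]` with `x₁ ≈ min(γ₀, δ, t b(0) / L)` the integrand is at
least `1 / (4t)²`; as its integral over `(0, γ']` is `1`, this forces `x₁ ≤ 16 t²`, which bounds
`t` below by a constant `τ` depending only on `b` and `γ₀`. Hence `b(x) ξ(γ') ≤ 1 - τ` for all
`x > 0`, the integrand is bounded by `1 / τ²`, and the two integrals over `(0, γ]` and `(0, γ']`
differ by at most `|γ - γ'| / τ²`.
-/

open MeasureTheory ProbabilityTheory Filter Set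
open scoped RealInnerProductSpace ENNReal NNReal

noncomputable section

lemma IntervalIntegrable.comp_of_abs_le {b g : ℝ → ℝ} {a c C : ℝ}
    (hb : IntervalIntegrable b volume a c) (hg : Measurable g)
    (hC : ∀ x ∈ uIoc a c, |g (b x)| ≤ C) : IntervalIntegrable (fun x => g (b x)) volume a c := by
  refine (intervalIntegrable_const (c := C)).mono_fun'
    (hg.comp_aemeasurable hb.def'.aestronglyMeasurable.aemeasurable).aestronglyMeasurable ?_
  filter_upwards [ae_restrict_mem measurableSet_uIoc] with x hx
  exact hC x hx

namespace CriticalityIntegral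

lemma sq_div_one_sub_le_one_div_sq {u τ : ℝ} (hτ : 0 < τ) (hτ1 : τ ≤ 1) (hu : u ≤ 1 - τ) :
    (u / (1 - u)) ^ 2 ≤ 1 / τ ^ 2 := by
  have h1u : 0 < 1 - u := by linarith
  have habs : |u / (1 - u)| ≤ 1 / τ := by
    rw [abs_div, abs_of_pos h1u, div_le_div_iff₀ h1u hτ]
    cases abs_cases u <;> nlinarith
  calc (u / (1 - u)) ^ 2 = |u / (1 - u)| ^ 2 := (sq_abs _).symm
    _ ≤ (1 / τ) ^ 2 := pow_le_pow_left₀ (abs_nonneg _) habs 2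
    _ = 1 / τ ^ 2 := by rw [div_pow, one_pow]

lemma one_div_sq_le_sq_div_one_sub {u t : ℝ} (ht : 0 < t) (ht4 : t ≤ 1 / 4)
    (hlo : 1 - 2 * t ≤ u) (hhi : u ≤ 1 - t) : 1 / (4 * t) ^ 2 ≤ (u / (1 - u)) ^ 2 := by
  have hdiv : 1 / (4 * t) ≤ u / (1 - u) := by
    rw [div_le_div_iff₀ (by positivity) (by linarith)]
    nlinarith
  calc 1 / (4 * t) ^ 2 = (1 / (4 * t)) ^ 2 := by rw [div_pow, one_pow]
    _ ≤ (u / (1 - u)) ^ 2 := pow_le_pow_left₀ (by positivity) hdiv 2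

section Gap

variable {b : ℝ → ℝ} {L δ ξ : ℝ}

lemma one_div_sq_le_integrand (hb_le : ∀ x, 0 ≤ x → b x ≤ b 0)
    (hLip : ∀ x ∈ Icc 0 δ, |b x - b 0| ≤ L * x) (hξ : 0 < ξ) (ht : 0 < 1 - b 0 * ξ)
    (ht4 : 1 - b 0 * ξ ≤ 1 / 4) {x : ℝ} (hx : 0 < x) (hxδ : x ≤ δ)
    (hxL : L * x ≤ (1 - b 0 * ξ) * b 0) :
    1 / (4 * (1 - b 0 * ξ)) ^ 2 ≤ (b x * ξ / (1 - b x * ξ)) ^ 2 := by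
  refine one_div_sq_le_sq_div_one_sub ht ht4 ?_ ?_
  · have hbx : b 0 - L * x ≤ b x := by linarith [(abs_le.mp (hLip x ⟨hx.le, hxδ⟩)).1]
    nlinarith [mul_le_mul_of_nonneg_right hbx hξ.le, mul_le_mul_of_nonneg_right hxL hξ.le]
  · nlinarith [mul_le_mul_of_nonneg_right (hb_le x hx.le) hξ.le]

lemma min_le_one_sub_mul_of_setIntegral_eq_one (hb_le : ∀ x, 0 ≤ x → b x ≤ b 0)
    (hLip : ∀ x ∈ Icc 0 δ, |b x - b 0| ≤ L * x) (hb0 : 0 < b 0) (hL : 0 < L) (hδ : 0 < δ)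
    (hξ : 0 < ξ) (hξb : b 0 * ξ < 1) {γ : ℝ} (hγ : 0 < γ)
    (hint : ∫ x in Ioc 0 γ, (b x * ξ / (1 - b x * ξ)) ^ 2 = 1) :
    min (1 / 4) (min (min γ δ / 4) (b 0 / (16 * L))) ≤ 1 - b 0 * ξ := by
  set t := 1 - b 0 * ξ
  have ht : 0 < t := by linarith
  rcases le_or_gt (1 / 4) t with ht4 | ht4
  · exact (min_le_left _ _).trans ht4
  set x₁ := min (min γ δ) (t * b 0 / L)
  have hx₁ : 0 < x₁ := lt_min (lt_min hγ hδ) (by positivity)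
  have hsub : Ioc 0 x₁ ⊆ Ioc 0 γ :=
    Ioc_subset_Ioc_right ((min_le_left _ _).trans (min_le_left _ _))
  have hlow : ∀ x ∈ Ioc 0 x₁, 1 / (4 * t) ^ 2 ≤ (b x * ξ / (1 - b x * ξ)) ^ 2 := by
    rintro x ⟨hx, hxx₁⟩
    refine one_div_sq_le_integrand hb_le hLip hξ ht ht4.le hx
      (hxx₁.trans ((min_le_left _ _).trans (min_le_right _ _))) ?_
    rw [← le_div_iff₀' hL]
    exact hxx₁.trans (min_le_right _ _)
  have hfi : IntegrableOn (fun x => (b x * ξ / (1 - b x * ξ)) ^ 2) (Ioc 0 γ) :=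
    Integrable.of_integral_ne_zero (by rw [hint]; exact one_ne_zero)
  have hx₁_le : x₁ ≤ (4 * t) ^ 2 := by
    have h := calc
      1 / (4 * t) ^ 2 * x₁ = 1 / (4 * t) ^ 2 * volume.real (Ioc 0 x₁) := by
          simp [hx₁.le]
      _ ≤ ∫ x in Ioc 0 x₁, (b x * ξ / (1 - b x * ξ)) ^ 2 :=
          setIntegral_ge_of_const_le_real measurableSet_Ioc measure_Ioc_lt_top.ne hlow
            (hfi.mono_set hsub)
      _ ≤ ∫ x in Ioc 0 γ, (b x * ξ / (1 - b x * ξ)) ^ 2 :=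
          setIntegral_mono_set hfi (ae_of_all _ fun _ => sq_nonneg _) hsub.eventuallyLE
      _ = 1 := hint
    rwa [one_div_mul_eq_div, div_le_one (by positivity)] at h
  rcases min_le_iff.mp hx₁_le with hγδ | hbL
  · refine (min_le_right _ _).trans ((min_le_left _ _).trans ?_)
    nlinarith
  · refine (min_le_right _ _).trans ((min_le_right _ _).trans ?_)
    rw [div_le_iff₀ hL] at hbL
    rw [div_le_iff₀ (by positivity)]
    nlinarith

lemma exists_pos_forall_le_one_sub_mul (hb_anti : AntitoneOn b (Ici 0)) (hb0 : 0 < b 0)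
    (hb_lip : ∃ L δ : ℝ, 0 < δ ∧ ∀ x ∈ Icc 0 δ, |b x - b 0| ≤ L * x) {γ₀ : ℝ} (hγ₀ : 0 < γ₀) :
    ∃ τ, 0 < τ ∧ τ ≤ 1 ∧ ∀ γ ξ, γ₀ ≤ γ → 0 < ξ → ξ < 1 / b 0 →
      ∫ x in Ioc 0 γ, (b x * ξ / (1 - b x * ξ)) ^ 2 = 1 → τ ≤ 1 - b 0 * ξ := by
  obtain ⟨L, δ, hδ, hLip⟩ := hb_lip
  have hLip' : ∀ x ∈ Icc 0 δ, |b x - b 0| ≤ max L 1 * x := fun x hx =>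
    (hLip x hx).trans (mul_le_mul_of_nonneg_right (le_max_left _ _) hx.1)
  have hb_le : ∀ x, 0 ≤ x → b x ≤ b 0 := fun x hx => hb_anti self_mem_Ici hx hx
  refine ⟨min (1 / 4) (min (min γ₀ δ / 4) (b 0 / (16 * max L 1))), by positivity,
    (min_le_left _ _).trans (by norm_num), fun γ ξ hγ hξ hξb hint => ?_⟩
  refine le_trans ?_ (min_le_one_sub_mul_of_setIntegral_eq_one hb_le hLip' hb0
    (by positivity) hδ hξ ((lt_div_iff₀' hb0).mp hξb) (hγ₀.trans_le hγ) hint)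
  gcongr

end Gap

lemma abs_setIntegral_Ioc_sub_le {f : ℝ → ℝ} {a c C : ℝ} (ha : 0 ≤ a) (hc : 0 ≤ c)
    (hfa : IntervalIntegrable f volume 0 a) (hfc : IntervalIntegrable f volume 0 c)
    (hC : ∀ x, 0 < x → |f x| ≤ C) :
    |(∫ x in Ioc 0 a, f x) - ∫ x in Ioc 0 c, f x| ≤ C * |a - c| := by
  rw [← intervalIntegral.integral_of_le ha, ← intervalIntegral.integral_of_le hc,
    intervalIntegral.integral_interval_sub_left hfa hfc]
  exact intervalIntegral.norm_integral_le_of_norm_le_const fun x hx =>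
    (Real.norm_eq_abs _).trans_le (hC x ((le_min hc ha).trans_lt hx.1))

end CriticalityIntegral

open CriticalityIntegral in
theorem criticality_integral_lipschitz_general
    -- the bulk function b : [0,∞) → [0,∞), non-increasing, b(0) > 0,
    -- Lipschitz continuous at 0, with ∫_0^∞ b(x) dx < ∞
    (b : ℝ → ℝ)
    (hb_anti : AntitoneOn b (Set.Ici 0))
    (hb0 : 0 < b 0)
    (hb_lip : ∃ L δ : ℝ, 0 < δ ∧ ∀ x ∈ Set.Icc (0:ℝ) δ, |b x - b 0| ≤ L * x)
    -- ξ(γ) : the unique solution in (0, 1/b(0)) of ∫_0^γ (b(x)ξ/(1-b(x)ξ))² dx = 1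
    (ξfun : ℝ → ℝ)
    (hξfun : ∀ γ : ℝ, 0 < γ → ξfun γ ∈ Set.Ioo 0 (1 / b 0) ∧
      ∫ x in Set.Ioc (0:ℝ) γ, (b x * ξfun γ / (1 - b x * ξfun γ)) ^ 2 = 1)
 :
    -- Conclusion: for every γ₀ > 0 there is c' > 0 such that for all γ, γ' ≥ γ₀,
    -- |∫_0^γ (b(x)ξ(γ')/(1 - b(x)ξ(γ')))² dx - 1| ≤ c' |γ - γ'|
    ∀ γ₀ : ℝ, 0 < γ₀ → ∃ c' : ℝ, 0 < c' ∧
      ∀ γ γ' : ℝ, γ₀ ≤ γ → γ₀ ≤ γ' →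
        |(∫ x in Set.Ioc (0:ℝ) γ, (b x * ξfun γ' / (1 - b x * ξfun γ')) ^ 2) - 1|
          ≤ c' * |γ - γ'| := by
  intro γ₀ hγ₀
  obtain ⟨τ, hτ, hτ1, hgap⟩ := exists_pos_forall_le_one_sub_mul hb_anti hb0 hb_lip hγ₀
  refine ⟨1 / τ ^ 2, by positivity, fun γ γ' hγ hγ' => ?_⟩
  obtain ⟨⟨hξ, hξb⟩, hint⟩ := hξfun γ' (hγ₀.trans_le hγ')
  set ξ := ξfun γ'
  have hbound : ∀ x, 0 < x → |(b x * ξ / (1 - b x * ξ)) ^ 2| ≤ 1 / τ ^ 2 := fun x hx => by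
    rw [abs_of_nonneg (sq_nonneg _)]
    refine sq_div_one_sub_le_one_div_sq hτ hτ1 ?_
    have hbx := mul_le_mul_of_nonneg_right (hb_anti self_mem_Ici hx.le hx.le) hξ.le
    linarith [hgap γ' ξ hγ' hξ hξb hint]
  have hf_int : ∀ c, 0 ≤ c →
      IntervalIntegrable (fun x => (b x * ξ / (1 - b x * ξ)) ^ 2) volume 0 c := fun c hc =>
    (hb_anti.mono (by rw [uIcc_of_le hc]; exact Icc_subset_Ici_self)).intervalIntegrable
      |>.comp_of_abs_le (g := fun u => (u * ξ / (1 - u * ξ)) ^ 2) (by fun_prop)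
        fun x hx => hbound x (by rw [uIoc_of_le hc] at hx; exact hx.1)
  have hγ_pos := hγ₀.trans_le hγ
  have hγ'_pos := hγ₀.trans_le hγ'
  have h := abs_setIntegral_Ioc_sub_le hγ_pos.le hγ'_pos.le (hf_int _ hγ_pos.le) (hf_int _ hγ'_pos.le)
    hbound
  rwa [hint] at h

theorem criticality_integral_lipschitz
    -- the bulk function b : [0,∞) → [0,∞), non-increasing, b(0) > 0,
    -- Lipschitz continuous at 0, with ∫_0^∞ b(x) dx < ∞
    (b : ℝ → ℝ)
    (hb_nonneg : ∀ x, 0 ≤ x → 0 ≤ b x)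
    (hb_anti : AntitoneOn b (Set.Ici 0))
    (hb0 : 0 < b 0)
    (hb_lip : ∃ L δ : ℝ, 0 < δ ∧ ∀ x ∈ Set.Icc (0:ℝ) δ, |b x - b 0| ≤ L * x)
    (hb_int : IntegrableOn b (Set.Ici 0))
    -- ξ(γ) : the unique solution in (0, 1/b(0)) of ∫_0^γ (b(x)ξ/(1-b(x)ξ))² dx = 1
    (ξfun : ℝ → ℝ)
    (hξfun : ∀ γ : ℝ, 0 < γ → ξfun γ ∈ Set.Ioo 0 (1 / b 0) ∧
      ∫ x in Set.Ioc (0:ℝ) γ, (b x * ξfun γ / (1 - b x * ξfun γ)) ^ 2 = 1)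
 :
    -- Conclusion: for every γ₀ > 0 there is c' > 0 such that for all γ, γ' ≥ γ₀,
    -- |∫_0^γ (b(x)ξ(γ')/(1 - b(x)ξ(γ')))² dx - 1| ≤ c' |γ - γ'|
    ∀ γ₀ : ℝ, 0 < γ₀ → ∃ c' : ℝ, 0 < c' ∧
      ∀ γ γ' : ℝ, γ₀ ≤ γ → γ₀ ≤ γ' →
        |(∫ x in Set.Ioc (0:ℝ) γ, (b x * ξfun γ' / (1 - b x * ξfun γ')) ^ 2) - 1|
          ≤ c' * |γ - γ'| :=
  criticality_integral_lipschitz_general b hb_anti hb0 hb_lip ξfun hξfun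

end
end
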